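/- Let q₀, q₁, q₂, q₃ ∈ ℝ³ be affinely independent, forming the closed quadrilateral P₄ with edges e₁ = [q₀,q₁], e₂ = [q₁,q₂], e₃ = [q₂,q₃], e₄ = [q₃,q₀]. Define the average crossing number ACN(P₄) = (1/(4π)) Σ_{(i,j), i≠j} ∫₀¹∫₀¹ |det(dᵢ, dⱼ, γᵢ(t)−γⱼ(s))| / ‖γᵢ(t)−γⱼ(s)‖³ ds dt, where the sum runs over ordered pairs of distinct edges, γᵢ is the linear parametrization of eᵢ and dᵢ its direction vector. Then ACN(P₄) = 2·|L(q₀,q₁;q₂,q₃)| + 2·|L(q₁,q₂;q₃,q₀)|, i.e., the average crossing number of the quadrilateral equals twice the sum of the absolute Gauss linking integrals of its two pairs of opposite edges. -/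

import Mathlib

/-!
Along two segments with directions `u` and `v`, the vector `γ₁(t) - γ₂(s)` differs from
`γ₁(0) - γ₂(0)` by a combination of `u` and `v`, so the numerator `det(u, v, γ₁(t) - γ₂(s))` of the
Gauss integrand is a constant. Hence each absolute Gauss integral is `|det|` times the positive
integral of `‖γ₁(t) - γ₂(s)‖⁻³`, i.e. `4π` times the absolute linking integral. Adjacent edges are
coplanar, so their constant vanishes, and by Fubini the ordered pairs `(i, j)` and `(j, i)`
contribute equally; only the two pairs of opposite edges survive, each counted twice.
-/

open MeasureTheory RealInnerProductSpace

noncomputable section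

/-- Euclidean 3-space. -/
abbrev R3 := EuclideanSpace ℝ (Fin 3)

/-- The cross product on Euclidean 3-space. -/
def cross3 (u v : R3) : R3 :=
  (EuclideanSpace.equiv (Fin 3) ℝ).symm
    ![u 1 * v 2 - u 2 * v 1, u 2 * v 0 - u 0 * v 2, u 0 * v 1 - u 1 * v 0]

/-- The scalar triple product `det(u,v,w) = ⟨u × v, w⟩`. -/
def det3 (u v w : R3) : ℝ := ⟪cross3 u v, w⟫

/-- The Gauss linking integral of the segments `[a,b]` and `[c,d]`. -/
def gaussL (a b c d : R3) : ℝ :=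
  (1 / (4 * Real.pi)) * ∫ t in (0:ℝ)..1, ∫ s in (0:ℝ)..1,
    det3 (b - a) (d - c) ((a + t • (b - a)) - (c + s • (d - c))) /
      ‖(a + t • (b - a)) - (c + s • (d - c))‖ ^ 3

/-- The (unnormalized) absolute Gauss integral of the segments `[a,b]` and `[c,d]`. -/
def rawAbsGauss (a b c d : R3) : ℝ :=
  ∫ t in (0:ℝ)..1, ∫ s in (0:ℝ)..1,
    |det3 (b - a) (d - c) ((a + t • (b - a)) - (c + s • (d - c)))| /
      ‖(a + t • (b - a)) - (c + s • (d - c))‖ ^ 3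

open Set

def invCubeIntegral (a b c d : R3) : ℝ :=
  ∫ t in (0:ℝ)..1, ∫ s in (0:ℝ)..1, (‖(a + t • (b - a)) - (c + s • (d - c))‖ ^ 3)⁻¹

lemma det3_apply (u v w : R3) : det3 u v w =
    (u 1 * v 2 - u 2 * v 1) * w 0 + (u 2 * v 0 - u 0 * v 2) * w 1 +
      (u 0 * v 1 - u 1 * v 0) * w 2 := by
  simp only [det3, cross3, PiLp.continuousLinearEquiv_symm_apply, PiLp.inner_apply,
    RCLike.inner_apply, Real.ringHom_apply, Fin.sum_univ_three, Matrix.cons_val_zero,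
    Matrix.cons_val_one, Matrix.cons_val]
  ring

lemma det3_add_smul_sub_add_smul (a c u v : R3) (t s : ℝ) :
    det3 u v ((a + t • u) - (c + s • v)) = det3 u v (a - c) := by
  simp only [det3_apply, PiLp.add_apply, PiLp.sub_apply, PiLp.smul_apply, smul_eq_mul]
  ring

lemma det3_swap_sub (u v a c : R3) : det3 v u (c - a) = det3 u v (a - c) := by
  simp only [det3_apply, PiLp.sub_apply]
  ring

lemma det3_self_left (u w : R3) : det3 u u w = 0 := by
  simp only [det3_apply]
  ring

lemma det3_adjacent (x y z : R3) : det3 (y - x) (z - y) (x - y) = 0 := by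
  simp only [det3_apply, PiLp.sub_apply]
  ring

lemma add_smul_ne_add_smul_of_det3_ne_zero {a b c d : R3}
    (h : det3 (b - a) (d - c) (a - c) ≠ 0) (t s : ℝ) :
    a + t • (b - a) ≠ c + s • (d - c) := by
  intro heq
  apply h
  rw [← det3_add_smul_sub_add_smul a c (b - a) (d - c) t s, heq, sub_self]
  simp only [det3_apply, PiLp.zero_apply, mul_zero, add_zero]

lemma invCubeIntegral_nonneg (a b c d : R3) : 0 ≤ invCubeIntegral a b c d :=
  intervalIntegral.integral_nonneg zero_le_one fun _ _ ↦
    intervalIntegral.integral_nonneg zero_le_one fun _ _ ↦ by positivity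

lemma invCubeIntegral_comm {a b c d : R3}
    (h : ∀ t ∈ Icc (0:ℝ) 1, ∀ s ∈ Icc (0:ℝ) 1, a + t • (b - a) ≠ c + s • (d - c)) :
    invCubeIntegral c d a b = invCubeIntegral a b c d := by
  set F : ℝ → ℝ → ℝ := fun t s ↦ (‖(a + t • (b - a)) - (c + s • (d - c))‖ ^ 3)⁻¹
  have hF : ContinuousOn F.uncurry (Icc 0 1 ×ˢ Icc 0 1) := by
    refine ContinuousOn.inv₀ (by fun_prop) fun p hp ↦ ?_
    exact pow_ne_zero 3 (norm_ne_zero_iff.mpr (sub_ne_zero.mpr (h p.1 hp.1 p.2 hp.2)))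
  have hFint : IntegrableOn F.uncurry (uIoc 0 1 ×ˢ uIoc 0 1) := by
    refine (hF.integrableOn_compact (isCompact_Icc.prod isCompact_Icc)).mono_set ?_
    rw [uIoc_of_le zero_le_one]
    exact prod_mono Ioc_subset_Icc_self Ioc_subset_Icc_self
  have hsymm : ∀ t s : ℝ,
      ‖(c + t • (d - c)) - (a + s • (b - a))‖ = ‖(a + s • (b - a)) - (c + t • (d - c))‖ :=
    fun _ _ ↦ norm_sub_rev _ _
  simp only [invCubeIntegral, hsymm]
  exact (intervalIntegral_intervalIntegral_swap hFint).symm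

lemma rawAbsGauss_eq (a b c d : R3) :
    rawAbsGauss a b c d = |det3 (b - a) (d - c) (a - c)| * invCubeIntegral a b c d := by
  simp only [rawAbsGauss, invCubeIntegral, det3_add_smul_sub_add_smul, div_eq_mul_inv,
    intervalIntegral.integral_const_mul]

lemma gaussL_eq (a b c d : R3) :
    gaussL a b c d =
      1 / (4 * Real.pi) * (det3 (b - a) (d - c) (a - c) * invCubeIntegral a b c d) := by
  simp only [gaussL, invCubeIntegral, det3_add_smul_sub_add_smul, div_eq_mul_inv,
    intervalIntegral.integral_const_mul, one_mul]

lemma rawAbsGauss_eq_abs_gaussL (a b c d : R3) :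
    rawAbsGauss a b c d = 4 * Real.pi * |gaussL a b c d| := by
  rw [rawAbsGauss_eq, gaussL_eq, abs_mul, abs_mul, abs_of_nonneg (invCubeIntegral_nonneg a b c d),
    abs_of_pos (by positivity : 0 < 1 / (4 * Real.pi))]
  field_simp

lemma rawAbsGauss_comm (a b c d : R3) : rawAbsGauss c d a b = rawAbsGauss a b c d := by
  rw [rawAbsGauss_eq, rawAbsGauss_eq, det3_swap_sub]
  by_cases h : det3 (b - a) (d - c) (a - c) = 0
  · simp [h]
  · rw [invCubeIntegral_comm fun t _ s _ ↦ add_smul_ne_add_smul_of_det3_ne_zero h t s]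

lemma rawAbsGauss_self (x y : R3) : rawAbsGauss x y x y = 0 := by
  simp [rawAbsGauss_eq, det3_self_left]

lemma rawAbsGauss_adjacent (x y z : R3) : rawAbsGauss x y y z = 0 := by
  simp [rawAbsGauss_eq, det3_adjacent]

lemma rawAbsGauss_adjacent' (x y z : R3) : rawAbsGauss y z x y = 0 := by
  rw [rawAbsGauss_comm, rawAbsGauss_adjacent]

theorem acn_quadrilateral_general (q₀ q₁ q₂ q₃ : R3) :
    ((1 / (4 * Real.pi)) *
        ∑ i : Fin 4, ∑ j ∈ Finset.univ.erase i,
          rawAbsGauss (![q₀, q₁, q₂, q₃] i) (![q₁, q₂, q₃, q₀] i)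
            (![q₀, q₁, q₂, q₃] j) (![q₁, q₂, q₃, q₀] j)) =
      2 * |gaussL q₀ q₁ q₂ q₃| + 2 * |gaussL q₁ q₂ q₃ q₀| := by
  have hdiag : ∀ i : Fin 4, ∑ j ∈ Finset.univ.erase i,
      rawAbsGauss (![q₀, q₁, q₂, q₃] i) (![q₁, q₂, q₃, q₀] i)
        (![q₀, q₁, q₂, q₃] j) (![q₁, q₂, q₃, q₀] j) =
      ∑ j, rawAbsGauss (![q₀, q₁, q₂, q₃] i) (![q₁, q₂, q₃, q₀] i)
        (![q₀, q₁, q₂, q₃] j) (![q₁, q₂, q₃, q₀] j) :=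
    fun i ↦ Finset.sum_erase _ (rawAbsGauss_self _ _)
  simp only [hdiag, Fin.sum_univ_four, Matrix.cons_val_zero, Matrix.cons_val_one,
    Matrix.cons_val_two, Matrix.cons_val_three, Matrix.head_cons, Matrix.tail_cons,
    rawAbsGauss_self, rawAbsGauss_adjacent, rawAbsGauss_adjacent']
  rw [rawAbsGauss_comm q₀ q₁ q₂ q₃, rawAbsGauss_comm q₁ q₂ q₃ q₀,
    rawAbsGauss_eq_abs_gaussL, rawAbsGauss_eq_abs_gaussL]
  field_simp
  ring

/-- The average crossing number of the closed quadrilateral with vertices `q₀ q₁ q₂ q₃`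
equals twice the sum of the absolute Gauss linking integrals of its two pairs of opposite
edges. -/
theorem acn_quadrilateral (q₀ q₁ q₂ q₃ : R3)
    (h : AffineIndependent ℝ ![q₀, q₁, q₂, q₃]) :
    ((1 / (4 * Real.pi)) *
        ∑ i : Fin 4, ∑ j ∈ Finset.univ.erase i,
          rawAbsGauss (![q₀, q₁, q₂, q₃] i) (![q₁, q₂, q₃, q₀] i)
            (![q₀, q₁, q₂, q₃] j) (![q₁, q₂, q₃, q₀] j)) =
      2 * |gaussL q₀ q₁ q₂ q₃| + 2 * |gaussL q₁ q₂ q₃ q₀| :=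
  acn_quadrilateral_general q₀ q₁ q₂ q₃
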